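/- arXiv:2111.13896 — 2 statements merged into one kernel-verified Lean document; each statement's English description precedes it below -/
import Mathlib

section
/- Let C₀, C_JN > 0 be constants for which the John–Nirenberg inequality holds on ℝ (for every locally integrable u : ℝ → ℂ with 0 < ‖u‖_* < ∞, every bounded interval I ⊂ ℝ, and every λ > 0, one has |{t ∈ I : |u(t) − u_I| ≥ λ}| ≤ C₀ |I| exp(−C_JN λ / ‖u‖_*)). Let C > 0, let φ : ℝ → ℂ be measurable with |φ(x)| ≤ C e^{−|x|} for all x, and let u : ℝ → ℂ be locally integrable with 0 < ‖u‖_* < C_JN. Then there exists a constant C(u) > 0 depending only on ‖u‖_*, C, C₀ and C_JN such that for all x ∈ ℝ and y > 0, ∫_ℝ |φ_y(x − t)| e^{|u(t) − u_{I(x,y)}|} dt ≤ C(u). -/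
open MeasureTheory Set Filter Topology
open scoped ENNReal

/-- The average of `u` over the bounded interval `(a, b)`. -/
noncomputable def intervalAvg (u : ℝ → ℂ) (a b : ℝ) : ℂ :=
  (b - a)⁻¹ • ∫ t in Set.Ioo a b, u t

/-- The mean oscillation of `u` over the bounded interval `(a, b)`. -/
noncomputable def oscAvg (u : ℝ → ℂ) (a b : ℝ) : ℝ :=
  (b - a)⁻¹ * ∫ t in Set.Ioo a b, ‖u t - intervalAvg u a b‖

/-- The BMO seminorm `‖u‖_*` (as an extended real, `⊤` meaning `u ∉ BMO`). -/
noncomputable def bmoNorm (u : ℝ → ℂ) : ℝ≥0∞ :=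
  ⨆ (a : ℝ) (b : ℝ) (_ : a < b), ENNReal.ofReal (oscAvg u a b)

/-- The John–Nirenberg inequality holds on `ℝ` with constants `C₀, CJN`. -/
def JNineq (C₀ CJN : ℝ) : Prop :=
  ∀ u : ℝ → ℂ, MeasureTheory.LocallyIntegrable u →
    0 < bmoNorm u → bmoNorm u ≠ ⊤ →
    ∀ a b : ℝ, a < b → ∀ lam : ℝ, 0 < lam →
      MeasureTheory.volume {t ∈ Set.Ioo a b | lam ≤ ‖u t - intervalAvg u a b‖} ≤
        ENNReal.ofReal (C₀ * (b - a) * Real.exp (-(CJN * lam) / (bmoNorm u).toReal))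

/-- The homogeneous `p`-Besov seminorm `‖u‖_{B_p}`. -/
noncomputable def besovNorm (p : ℝ) (u : ℝ → ℂ) : ℝ≥0∞ :=
  (∫⁻ t : ℝ, ∫⁻ s : ℝ, ENNReal.ofReal (‖u t - u s‖ ^ p / (t - s) ^ 2)) ^ (1 / p)

/-- The dilated kernel `φ_y(x) = y⁻¹ φ(y⁻¹ x)`. -/
noncomputable def dil (φ : ℝ → ℂ) (y x : ℝ) : ℂ := (y : ℂ)⁻¹ * φ (x / y)

section helpers

variable {u : ℝ → ℂ}

lemma intervalAvg_integrableOn (hu : LocallyIntegrable u) (a b : ℝ) :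
    IntegrableOn u (Set.Ioo a b) :=
  (hu.integrableOn_isCompact isCompact_Icc).mono_set Set.Ioo_subset_Icc_self

lemma oscAvg_nonneg {a b : ℝ} (h : a < b) : 0 ≤ oscAvg u a b := by
  apply mul_nonneg (inv_nonneg.2 (by linarith))
  exact integral_nonneg fun t => norm_nonneg _

lemma oscAvg_le (hne : bmoNorm u ≠ ⊤) {a b : ℝ} (h : a < b) :
    oscAvg u a b ≤ (bmoNorm u).toReal := by
  have h1 : ENNReal.ofReal (oscAvg u a b) ≤ bmoNorm u :=
    le_iSup_of_le a (le_iSup_of_le b (le_iSup_of_le h le_rfl))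
  calc oscAvg u a b = (ENNReal.ofReal (oscAvg u a b)).toReal :=
        (ENNReal.toReal_ofReal (oscAvg_nonneg h)).symm
    _ ≤ _ := ENNReal.toReal_mono hne h1

lemma norm_avg_sub_avg_le (hu : LocallyIntegrable u) {a b a' b' : ℝ}
    (h1 : a ≤ a') (h2 : a' < b') (h3 : b' ≤ b) :
    ‖intervalAvg u a' b' - intervalAvg u a b‖ ≤ (b - a) / (b' - a') * oscAvg u a b := by
  have hab : a < b := lt_of_le_of_lt h1 (lt_of_lt_of_le h2 h3)
  set c := intervalAvg u a b with hc
  have hba : (0:ℝ) < b' - a' := by linarith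
  have hint : IntegrableOn u (Set.Ioo a' b') := intervalAvg_integrableOn hu a' b'
  have hconst : IntegrableOn (fun _ : ℝ => c) (Set.Ioo a' b') := by
    refine integrableOn_const ?_ (by simp)
    rw [Real.volume_Ioo]; exact ENNReal.ofReal_ne_top
  have hconst2 : IntegrableOn (fun _ : ℝ => c) (Set.Ioo a b) := by
    refine integrableOn_const ?_ (by simp)
    rw [Real.volume_Ioo]; exact ENNReal.ofReal_ne_top
  have key : (b' - a')⁻¹ • ∫ t in Set.Ioo a' b', (u t - c) = intervalAvg u a' b' - c := by
    rw [integral_sub hint hconst, setIntegral_const, Real.volume_real_Ioo_of_le h2.le,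
      smul_sub, smul_smul, inv_mul_cancel₀ hba.ne', one_smul,
      intervalAvg]
  rw [← key, norm_smul, Real.norm_of_nonneg (inv_nonneg.2 hba.le)]
  have h4 : ‖∫ t in Set.Ioo a' b', (u t - c)‖ ≤ ∫ t in Set.Ioo a' b', ‖u t - c‖ :=
    norm_integral_le_integral_norm _
  have h5 : ∫ t in Set.Ioo a' b', ‖u t - c‖ ≤ ∫ t in Set.Ioo a b, ‖u t - c‖ := by
    apply setIntegral_mono_set ((intervalAvg_integrableOn hu a b).sub hconst2).norm
    · exact .of_forall fun t => norm_nonneg _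
    · exact HasSubset.Subset.eventuallyLE (Set.Ioo_subset_Ioo h1 h3)
  have h6 : ∫ t in Set.Ioo a b, ‖u t - c‖ = (b - a) * oscAvg u a b := by
    rw [oscAvg, ← hc, ← mul_assoc, mul_inv_cancel₀ (by linarith : (b:ℝ) - a ≠ 0), one_mul]
  calc (b' - a')⁻¹ * ‖∫ t in Set.Ioo a' b', (u t - c)‖
      ≤ (b' - a')⁻¹ * ((b - a) * oscAvg u a b) := by
        apply mul_le_mul_of_nonneg_left _ (inv_nonneg.2 hba.le)
        calc ‖∫ t in Set.Ioo a' b', (u t - c)‖ ≤ _ := h4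
          _ ≤ _ := h5
          _ = _ := h6
    _ = (b - a) / (b' - a') * oscAvg u a b := by ring

end helpers

section helpers2

variable {u : ℝ → ℂ}

lemma avg_chain (hu : LocallyIntegrable u) (hne : bmoNorm u ≠ ⊤) {x y : ℝ} (hy : 0 < y) :
    ∀ k : ℕ, ‖intervalAvg u (x - 2^k * y) (x + 2^k * y) - intervalAvg u (x - y) (x + y)‖ ≤
      2 * k * (bmoNorm u).toReal := by
  intro k
  induction k with
  | zero => simp
  | succ k ih =>
    have B0 : 0 ≤ (bmoNorm u).toReal := ENNReal.toReal_nonneg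
    have h2k : (0:ℝ) < 2^k := by positivity
    have hab : x - 2^(k+1)*y < x + 2^(k+1)*y := by nlinarith [pow_pos (by norm_num : (0:ℝ)<2) (k+1)]
    have hstep : ‖intervalAvg u (x - 2^(k+1)*y) (x + 2^(k+1)*y) -
        intervalAvg u (x - 2^k*y) (x + 2^k*y)‖ ≤ 2 * (bmoNorm u).toReal := by
      have hp : (2:ℝ)^(k+1) = 2^k*2 := pow_succ 2 k
      have hky : 0 < 2^k*y := mul_pos h2k hy
      have h := norm_avg_sub_avg_le hu (a := x - 2^(k+1)*y) (b := x + 2^(k+1)*y)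
        (a' := x - 2^k*y) (b' := x + 2^k*y)
        (by rw [hp]; nlinarith) (by nlinarith) (by rw [hp]; nlinarith)
      have hr : ((x + 2^(k+1)*y) - (x - 2^(k+1)*y)) / ((x + 2^k*y) - (x - 2^k*y)) = 2 := by
        rw [div_eq_iff (by nlinarith)]; ring
      rw [hr] at h
      -- note: order of sub in h is avg small - avg big; goal is big - small
      rw [norm_sub_rev]
      calc ‖intervalAvg u (x - 2^k*y) (x + 2^k*y) -
          intervalAvg u (x - 2^(k+1)*y) (x + 2^(k+1)*y)‖
          ≤ 2 * oscAvg u (x - 2^(k+1)*y) (x + 2^(k+1)*y) := h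
        _ ≤ 2 * (bmoNorm u).toReal := by
            have := oscAvg_le hne hab
            linarith
    calc ‖intervalAvg u (x - 2^(k+1) * y) (x + 2^(k+1) * y) - intervalAvg u (x - y) (x + y)‖
        ≤ ‖intervalAvg u (x - 2^(k+1)*y) (x + 2^(k+1)*y) -
            intervalAvg u (x - 2^k*y) (x + 2^k*y)‖ +
          ‖intervalAvg u (x - 2^k*y) (x + 2^k*y) - intervalAvg u (x - y) (x + y)‖ :=
          norm_sub_le_norm_sub_add_norm_sub _ _ _
      _ ≤ 2 * (bmoNorm u).toReal + 2 * k * (bmoNorm u).toReal := add_le_add hstep ih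
      _ = 2 * ((k:ℝ)+1) * (bmoNorm u).toReal := by ring
      _ = 2 * ((k+1 : ℕ):ℝ) * (bmoNorm u).toReal := by push_cast; ring

lemma exp_osc_bound {C₀ CJN : ℝ} (hC₀ : 0 < C₀) (hCJN : 0 < CJN) (hJN : JNineq C₀ CJN)
    (hu : LocallyIntegrable u) (h0 : 0 < bmoNorm u) (hlt : bmoNorm u < ENNReal.ofReal CJN)
    {a b : ℝ} (hab : a < b) :
    ∫⁻ t in Set.Ioo a b, ENNReal.ofReal (Real.exp ‖u t - intervalAvg u a b‖) ≤
      ENNReal.ofReal ((b - a) *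
        (1 + C₀ * (bmoNorm u).toReal / (CJN - (bmoNorm u).toReal))) := by
  have hne : bmoNorm u ≠ ⊤ := hlt.ne_top
  set B := (bmoNorm u).toReal with hB
  have hB0 : 0 < B := ENNReal.toReal_pos h0.ne' hne
  have hBlt : B < CJN := by
    have := ENNReal.toReal_strict_mono (by simp) hlt
    rwa [ENNReal.toReal_ofReal hCJN.le] at this
  set δ := (CJN - B) / B with hδ
  have hδ0 : 0 < δ := by apply div_pos <;> linarith
  set f : ℝ → ℝ := fun t => ‖u t - intervalAvg u a b‖ with hf
  have f_nn : 0 ≤ᵐ[volume.restrict (Set.Ioo a b)] f := .of_forall fun t => norm_nonneg _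
  have f_mble : AEMeasurable f (volume.restrict (Set.Ioo a b)) :=
    ((hu.aestronglyMeasurable.sub aestronglyMeasurable_const).norm).aemeasurable.restrict
  have lc : ∫⁻ t in Set.Ioo a b, ENNReal.ofReal (Real.exp (f t) - 1) =
      ∫⁻ s in Set.Ioi (0:ℝ),
        (volume.restrict (Set.Ioo a b)) {t | s ≤ f t} * ENNReal.ofReal (Real.exp s) := by
    have h := lintegral_comp_eq_lintegral_meas_le_mul (volume.restrict (Set.Ioo a b)) f_nn
      f_mble (g := Real.exp) (fun t _ => intervalIntegral.intervalIntegrable_exp)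
      (.of_forall fun t => (Real.exp_pos t).le)
    simpa [integral_exp, Real.exp_zero] using h
  have split : ∫⁻ t in Set.Ioo a b, ENNReal.ofReal (Real.exp (f t)) =
      (∫⁻ t in Set.Ioo a b, ENNReal.ofReal (Real.exp (f t) - 1)) + ENNReal.ofReal (b - a) := by
    have : ∀ t : ℝ, ENNReal.ofReal (Real.exp (f t)) =
        ENNReal.ofReal (Real.exp (f t) - 1) + 1 := by
      intro t
      rw [← ENNReal.ofReal_one, ← ENNReal.ofReal_add (by
        have : 1 ≤ Real.exp (f t) := Real.one_le_exp (norm_nonneg _)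
        linarith) (by norm_num)]
      norm_num
    rw [lintegral_congr this, lintegral_add_right' _ aemeasurable_const,
      setLIntegral_one, Real.volume_Ioo]
  have tail : ∫⁻ s in Set.Ioi (0:ℝ),
      (volume.restrict (Set.Ioo a b)) {t | s ≤ f t} * ENNReal.ofReal (Real.exp s) ≤
      ENNReal.ofReal (C₀ * (b - a)) * ENNReal.ofReal δ⁻¹ := by
    have hbd : ∀ s ∈ Set.Ioi (0:ℝ),
        (volume.restrict (Set.Ioo a b)) {t | s ≤ f t} * ENNReal.ofReal (Real.exp s) ≤
        ENNReal.ofReal (C₀ * (b - a)) * ENNReal.ofReal (Real.exp (-(δ * s))) := by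
      intro s hs
      have hmeas : (volume.restrict (Set.Ioo a b)) {t | s ≤ f t} =
          volume {t ∈ Set.Ioo a b | s ≤ f t} := by
        rw [Measure.restrict_apply' measurableSet_Ioo]
        congr 1; ext t; simp [Set.mem_sep_iff, and_comm]
      have hJ := hJN u hu h0 hne a b hab s hs
      rw [← hB] at hJ
      calc (volume.restrict (Set.Ioo a b)) {t | s ≤ f t} * ENNReal.ofReal (Real.exp s)
          ≤ ENNReal.ofReal (C₀ * (b - a) * Real.exp (-(CJN * s) / B)) *
              ENNReal.ofReal (Real.exp s) := by
            rw [hmeas]; exact mul_le_mul_left hJ _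
        _ = ENNReal.ofReal (C₀ * (b - a)) * ENNReal.ofReal (Real.exp (-(δ * s))) := by
            have hba : (0:ℝ) < b - a := by linarith
            rw [← ENNReal.ofReal_mul (mul_nonneg (mul_nonneg hC₀.le hba.le)
                (Real.exp_pos _).le),
              ← ENNReal.ofReal_mul (mul_nonneg hC₀.le hba.le)]
            congr 1
            rw [mul_assoc, ← Real.exp_add]
            congr 1
            rw [hδ]
            field_simp
            ring
    calc ∫⁻ s in Set.Ioi (0:ℝ), (volume.restrict (Set.Ioo a b)) {t | s ≤ f t} *
            ENNReal.ofReal (Real.exp s)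
        ≤ ∫⁻ s in Set.Ioi (0:ℝ), ENNReal.ofReal (C₀ * (b - a)) *
            ENNReal.ofReal (Real.exp (-(δ * s))) := by
          apply lintegral_mono_ae
          rw [ae_restrict_iff' measurableSet_Ioi]
          exact .of_forall hbd
      _ = ENNReal.ofReal (C₀ * (b - a)) *
            ∫⁻ s in Set.Ioi (0:ℝ), ENNReal.ofReal (Real.exp (-(δ * s))) :=
          lintegral_const_mul' _ _ ENNReal.ofReal_ne_top
      _ = ENNReal.ofReal (C₀ * (b - a)) * ENNReal.ofReal δ⁻¹ := by
          congr 1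
          have hint : IntegrableOn (fun s : ℝ => Real.exp (-(δ * s))) (Set.Ioi 0) := by
            simpa [neg_mul] using exp_neg_integrableOn_Ioi 0 hδ0
          rw [← ofReal_integral_eq_lintegral_ofReal hint
            (.of_forall fun s => (Real.exp_pos _).le)]
          congr 1
          have h := integral_comp_mul_left_Ioi (fun s => Real.exp (-s)) 0 hδ0
          simp only [mul_zero] at h
          rw [h, integral_exp_neg_Ioi_zero, smul_eq_mul, mul_one]
  calc ∫⁻ t in Set.Ioo a b, ENNReal.ofReal (Real.exp (f t))
      = (∫⁻ t in Set.Ioo a b, ENNReal.ofReal (Real.exp (f t) - 1)) + ENNReal.ofReal (b - a) :=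
        split
    _ ≤ ENNReal.ofReal (C₀ * (b - a)) * ENNReal.ofReal δ⁻¹ + ENNReal.ofReal (b - a) := by
        rw [lc]; exact add_le_add tail le_rfl
    _ = ENNReal.ofReal ((b - a) * (1 + C₀ * B / (CJN - B))) := by
        have hba : (0:ℝ) < b - a := by linarith
        have hδinv : (0:ℝ) ≤ δ⁻¹ := inv_nonneg.2 hδ0.le
        rw [← ENNReal.ofReal_mul (mul_nonneg hC₀.le hba.le),
          ← ENNReal.ofReal_add (mul_nonneg (mul_nonneg hC₀.le hba.le) hδinv) hba.le]
        congr 1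
        rw [hδ]
        field_simp
        ring

end helpers2

lemma summable_aux (B : ℝ) :
    Summable (fun k : ℕ => (2:ℝ)^k * Real.exp (2*k*B + 1 - 2^k/2)) := by
  apply summable_of_ratio_norm_eventually_le (r := 1/2) (by norm_num)
  have hpow : Tendsto (fun k : ℕ => (2:ℝ)^k) atTop atTop :=
    tendsto_pow_atTop_atTop_of_one_lt (by norm_num)
  have h2 : Tendsto (fun k : ℕ => 2*B - 2^k/2) atTop atBot := by
    have h3 : Tendsto (fun k : ℕ => (2:ℝ)^k/2) atTop atTop :=
      hpow.atTop_div_const (by norm_num)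
    simpa [sub_eq_add_neg] using tendsto_atBot_add_const_left atTop (2*B)
      (tendsto_neg_atTop_atBot.comp h3)
  have h1 : Tendsto (fun k : ℕ => 2 * Real.exp (2*B - 2^k/2)) atTop (nhds 0) := by
    rw [show (0:ℝ) = 2 * 0 by norm_num]
    exact (Real.tendsto_exp_atBot.comp h2).const_mul 2
  filter_upwards [h1.eventually_lt_const (by norm_num : (0:ℝ) < 1/2)] with k hk
  have hid : (2:ℝ)^(k+1) * Real.exp (2*(k+1:ℕ)*B + 1 - 2^(k+1)/2) =
      (2 * Real.exp (2*B - 2^k/2)) * ((2:ℝ)^k * Real.exp (2*k*B + 1 - 2^k/2)) := by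
    rw [mul_mul_mul_comm, ← Real.exp_add, pow_succ]
    push_cast
    ring_nf
  rw [hid, norm_mul]
  apply mul_le_mul_of_nonneg_right _ (norm_nonneg _)
  rw [Real.norm_of_nonneg (by positivity)]
  exact hk.le

/-- for a kernel with exponential decay and a BMO function with norm below the
John–Nirenberg constant, the convolution-type integral of `e^{|u − u_I|}` is bounded by a
constant depending only on `‖u‖_*`, `C`, `C₀`, `C_JN`. -/
theorem stmt7 (C₀ CJN : ℝ) (hC₀ : 0 < C₀) (hCJN : 0 < CJN) (hJN : JNineq C₀ CJN)
    (C : ℝ) (hC : 0 < C) :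
    ∃ F : ℝ → ℝ,
      ∀ φ : ℝ → ℂ, Measurable φ → (∀ x, ‖φ x‖ ≤ C * Real.exp (-|x|)) →
      ∀ u : ℝ → ℂ, LocallyIntegrable u → 0 < bmoNorm u →
        bmoNorm u < ENNReal.ofReal CJN →
        0 < F (bmoNorm u).toReal ∧
        ∀ x y : ℝ, 0 < y →
          ∫⁻ t : ℝ, ENNReal.ofReal
              (‖dil φ y (x - t)‖ * Real.exp ‖u t - intervalAvg u (x - y) (x + y)‖) ≤
            ENNReal.ofReal (F (bmoNorm u).toReal) := by
  classical
  refine ⟨fun B => 2 * C * (1 + C₀ * B / (CJN - B)) *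
    ∑' k : ℕ, ((2:ℝ)^k * Real.exp (2*k*B + 1 - 2^k/2)), ?_⟩
  intro φ hφm hφ u hu h0 hlt
  have hne : bmoNorm u ≠ ⊤ := hlt.ne_top
  set B := (bmoNorm u).toReal with hB
  have hB0 : 0 < B := ENNReal.toReal_pos h0.ne' hne
  have hBlt : B < CJN := by
    have h := ENNReal.toReal_strict_mono (by simp) hlt
    rwa [ENNReal.toReal_ofReal hCJN.le] at h
  have hCB : CJN - B ≠ 0 := by linarith
  have hsum := summable_aux B
  have hKpos : 0 < 1 + C₀ * B / (CJN - B) := by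
    have : 0 < C₀ * B / (CJN - B) := by
      apply div_pos (mul_pos hC₀ hB0); linarith
    linarith
  refine ⟨?_, ?_⟩
  · apply mul_pos (mul_pos (by linarith) hKpos)
    exact Summable.tsum_pos hsum (fun k => by positivity) 0 (by positivity)
  · intro x y hy
    set c0 := intervalAvg u (x - y) (x + y) with hc0
    set I : ℕ → Set ℝ := fun k => Set.Ioo (x - 2^k*y) (x + 2^k*y) with hIdef
    set A : ℕ → Set ℝ := fun k => match k with
      | 0 => I 0
      | (j+1) => I (j+1) \ I j
      with hAdef
    have hImeas : ∀ k, MeasurableSet (I k) := fun k => measurableSet_Ioo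
    have hAmeas : ∀ k : ℕ, MeasurableSet (A k) := by
      intro k
      match k with
      | 0 => exact hImeas 0
      | (j+1) => exact (hImeas (j+1)).diff (hImeas j)
    have hAsub : ∀ k : ℕ, A k ⊆ I k := by
      intro k
      match k with
      | 0 => exact subset_rfl
      | (j+1) => exact Set.diff_subset
    have cover : ∀ t : ℝ, ∃ k, t ∈ A k := by
      intro t
      have hex : ∃ k : ℕ, t ∈ I k := by
        obtain ⟨k, hk⟩ := pow_unbounded_of_one_lt (|x - t| / y) (by norm_num : (1:ℝ) < 2)
        rw [div_lt_iff₀ hy] at hk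
        obtain ⟨h1', h2'⟩ := abs_sub_lt_iff.mp hk
        exact ⟨k, by simp only [hIdef, Set.mem_Ioo]; constructor <;> linarith⟩
      rcases hfind : Nat.find hex with _ | j
      · refine ⟨0, ?_⟩
        have := Nat.find_spec hex
        rwa [hfind] at this
      · have hspec := Nat.find_spec hex
        rw [hfind] at hspec
        have hnot : t ∉ I j := Nat.find_min hex (by rw [hfind]; exact Nat.lt_succ_self j)
        exact ⟨j+1, ⟨hspec, hnot⟩⟩
    have hFk : ∀ k : ℕ, (∫⁻ t in A k, ENNReal.ofReal
        (‖dil φ y (x - t)‖ * Real.exp ‖u t - c0‖)) ≤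
        ENNReal.ofReal (2 * C * (1 + C₀ * B / (CJN - B)) *
          ((2:ℝ)^k * Real.exp (2*k*B + 1 - 2^k/2))) := by
      intro k
      set ck := intervalAvg u (x - 2^k*y) (x + 2^k*y) with hck
      have h2k : (0:ℝ) < 2^k := by positivity
      have habs : ∀ t ∈ A k, (2:ℝ)^k/2 - 1 ≤ |x - t| / y := by
        match k with
        | 0 =>
          intro t _
          have h' : (0:ℝ) ≤ |x - t| / y := by positivity
          norm_num
          linarith
        | (j+1) =>
          intro t ht
          obtain ⟨_, hnot⟩ := ht
          simp only [hIdef, Set.mem_Ioo, not_and_or, not_lt] at hnot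
          have h2j : (0:ℝ) < 2^j := by positivity
          have hj : 2^j * y ≤ |x - t| := by
            rcases hnot with h | h
            · rw [abs_of_nonneg (by nlinarith)]; linarith
            · rw [abs_of_nonpos (by nlinarith)]; linarith
          rw [le_div_iff₀ hy]
          have hp : (2:ℝ)^(j+1) = 2^j*2 := pow_succ 2 j
          nlinarith
      have hker : ∀ t ∈ A k, ‖dil φ y (x - t)‖ ≤ C * y⁻¹ * Real.exp (1 - 2^k/2) := by
        intro t ht
        have h1 : ‖dil φ y (x - t)‖ = y⁻¹ * ‖φ ((x - t)/y)‖ := by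
          rw [dil, norm_mul, norm_inv, Complex.norm_real, Real.norm_eq_abs, abs_of_pos hy]
        rw [h1]
        have h2 := hφ ((x - t)/y)
        have h3 : Real.exp (-|(x - t)/y|) ≤ Real.exp (1 - 2^k/2) := by
          apply Real.exp_le_exp.2
          have h4 := habs t ht
          rw [abs_div, abs_of_pos hy]
          linarith
        calc y⁻¹ * ‖φ ((x - t)/y)‖ ≤ y⁻¹ * (C * Real.exp (-|(x - t)/y|)) :=
              mul_le_mul_of_nonneg_left h2 (inv_nonneg.2 hy.le)
          _ ≤ y⁻¹ * (C * Real.exp (1 - 2^k/2)) :=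
              mul_le_mul_of_nonneg_left (mul_le_mul_of_nonneg_left h3 hC.le)
                (inv_nonneg.2 hy.le)
          _ = C * y⁻¹ * Real.exp (1 - 2^k/2) := by ring
      have hosc : ∀ t : ℝ, Real.exp ‖u t - c0‖ ≤
          Real.exp (2*k*B) * Real.exp ‖u t - ck‖ := by
        intro t
        rw [← Real.exp_add]
        apply Real.exp_le_exp.2
        have htri : ‖u t - c0‖ ≤ ‖u t - ck‖ + ‖ck - c0‖ :=
          norm_sub_le_norm_sub_add_norm_sub _ _ _
        have hch := avg_chain hu hne (x := x) hy k
        rw [← hck, ← hc0, ← hB] at hch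
        linarith
      have hpt : ∀ t ∈ A k, ENNReal.ofReal (‖dil φ y (x - t)‖ * Real.exp ‖u t - c0‖) ≤
          ENNReal.ofReal (C * y⁻¹ * Real.exp (1 - 2^k/2) * Real.exp (2*k*B)) *
            ENNReal.ofReal (Real.exp ‖u t - ck‖) := by
        intro t ht
        rw [← ENNReal.ofReal_mul (by positivity)]
        apply ENNReal.ofReal_le_ofReal
        calc ‖dil φ y (x - t)‖ * Real.exp ‖u t - c0‖
            ≤ (C * y⁻¹ * Real.exp (1 - 2^k/2)) *
                (Real.exp (2*k*B) * Real.exp ‖u t - ck‖) :=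
              mul_le_mul (hker t ht) (hosc t) (Real.exp_pos _).le (by positivity)
          _ = C * y⁻¹ * Real.exp (1 - 2^k/2) * Real.exp (2*k*B) *
                Real.exp ‖u t - ck‖ := by ring
      calc (∫⁻ t in A k, ENNReal.ofReal (‖dil φ y (x - t)‖ * Real.exp ‖u t - c0‖))
          ≤ ∫⁻ t in A k, ENNReal.ofReal (C * y⁻¹ * Real.exp (1 - 2^k/2) *
              Real.exp (2*k*B)) * ENNReal.ofReal (Real.exp ‖u t - ck‖) :=
            setLIntegral_mono' (hAmeas k) hpt
        _ = ENNReal.ofReal (C * y⁻¹ * Real.exp (1 - 2^k/2) * Real.exp (2*k*B)) *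
              ∫⁻ t in A k, ENNReal.ofReal (Real.exp ‖u t - ck‖) :=
            lintegral_const_mul' _ _ ENNReal.ofReal_ne_top
        _ ≤ ENNReal.ofReal (C * y⁻¹ * Real.exp (1 - 2^k/2) * Real.exp (2*k*B)) *
              ∫⁻ t in I k, ENNReal.ofReal (Real.exp ‖u t - ck‖) :=
            mul_le_mul_right (lintegral_mono_set (hAsub k)) _
        _ ≤ ENNReal.ofReal (C * y⁻¹ * Real.exp (1 - 2^k/2) * Real.exp (2*k*B)) *
              ENNReal.ofReal (((x + 2^k*y) - (x - 2^k*y)) * (1 + C₀ * B / (CJN - B))) :=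
            mul_le_mul_right (exp_osc_bound hC₀ hCJN hJN hu h0 hlt (by nlinarith)) _
        _ = ENNReal.ofReal (2 * C * (1 + C₀ * B / (CJN - B)) *
              ((2:ℝ)^k * Real.exp (2*k*B + 1 - 2^k/2))) := by
            rw [← ENNReal.ofReal_mul (by positivity)]
            congr 1
            have he : Real.exp (2*(k:ℝ)*B + 1 - 2^k/2) =
                Real.exp (1 - 2^k/2) * Real.exp (2*(k:ℝ)*B) := by
              rw [← Real.exp_add]; ring_nf
            rw [he]
            field_simp
            ring
    have hcover : (Set.univ : Set ℝ) = ⋃ k, A k :=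
      (Set.eq_univ_of_forall fun t => Set.mem_iUnion.2 (cover t)).symm
    calc (∫⁻ t : ℝ, ENNReal.ofReal (‖dil φ y (x - t)‖ * Real.exp ‖u t - c0‖))
        = ∫⁻ t in ⋃ k, A k, ENNReal.ofReal (‖dil φ y (x - t)‖ * Real.exp ‖u t - c0‖) := by
          rw [← setLIntegral_univ, hcover]
      _ ≤ ∑' k, ∫⁻ t in A k, ENNReal.ofReal (‖dil φ y (x - t)‖ * Real.exp ‖u t - c0‖) :=
          lintegral_iUnion_le _ _
      _ ≤ ∑' k : ℕ, ENNReal.ofReal (2 * C * (1 + C₀ * B / (CJN - B)) *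
            ((2:ℝ)^k * Real.exp (2*k*B + 1 - 2^k/2))) := ENNReal.tsum_le_tsum hFk
      _ = ENNReal.ofReal (∑' k : ℕ, 2 * C * (1 + C₀ * B / (CJN - B)) *
            ((2:ℝ)^k * Real.exp (2*k*B + 1 - 2^k/2))) :=
          (ENNReal.ofReal_tsum_of_nonneg
            (fun k => mul_nonneg (mul_nonneg (by linarith) hKpos.le) (by positivity))
            (hsum.mul_left _)).symm
      _ = ENNReal.ofReal (2 * C * (1 + C₀ * B / (CJN - B)) *
            ∑' k : ℕ, ((2:ℝ)^k * Real.exp (2*k*B + 1 - 2^k/2))) := by rw [tsum_mul_left]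
end

section
/- Let C₀, C_JN > 0 be constants for which the John–Nirenberg inequality holds on ℝ (for every locally integrable u : ℝ → ℂ with 0 < ‖u‖_* < ∞, every bounded interval I ⊂ ℝ, and every λ > 0, one has |{t ∈ I : |u(t) − u_I| ≥ λ}| ≤ C₀ |I| exp(−C_JN λ / ‖u‖_*)). Let C > 0 and let φ : ℝ → ℂ be measurable with |φ(x)| ≤ C e^{−|x|} for all x and ∫_ℝ φ(x) dx = 1. Then there exists a constant C₁ > 0, depending only on C, C₀ and C_JN, such that for every locally integrable u : ℝ → ℂ with ‖u‖_* < ∞ and all x ∈ ℝ, y > 0: |(φ_y ∗ u)(x) − u_{I(x,y)}| ≤ C₁ ‖u‖_*; consequently e^{−C₁‖u‖_*} ≤ |e^{(φ_y ∗ u)(x) − u_{I(x,y)}}| ≤ e^{C₁‖u‖_*}. -/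
open MeasureTheory Set Filter Topology
open scoped ENNReal

section AuxStmt9

variable {u : ℝ → ℂ} {a b : ℝ}

lemma integrableOn_Ioo (hu : LocallyIntegrable u) : IntegrableOn u (Set.Ioo a b) :=
  (hu.integrableOn_isCompact isCompact_Icc).mono_set Set.Ioo_subset_Icc_self

lemma osc_le (hu_top : bmoNorm u ≠ ⊤) (hab : a < b) :
    oscAvg u a b ≤ (bmoNorm u).toReal := by
  have h0 : 0 ≤ oscAvg u a b := by
    apply mul_nonneg (inv_nonneg.2 (sub_nonneg.2 hab.le))
    exact integral_nonneg fun t => norm_nonneg _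
  have h1 : ENNReal.ofReal (oscAvg u a b) ≤ bmoNorm u := by
    refine le_iSup_of_le a ?_
    refine le_iSup_of_le b ?_
    exact le_iSup_of_le hab le_rfl
  have := ENNReal.toReal_mono hu_top h1
  rwa [ENNReal.toReal_ofReal h0] at this

lemma avg_sub (hu : LocallyIntegrable u) (hab : a < b) (c : ℂ) :
    intervalAvg u a b - c = (b - a)⁻¹ • ∫ t in Set.Ioo a b, (u t - c) := by
  have hba : (0:ℝ) < b - a := sub_pos.2 hab
  have hint : IntegrableOn u (Set.Ioo a b) := integrableOn_Ioo hu
  have hconst : IntegrableOn (fun _ : ℝ => c) (Set.Ioo a b) :=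
    integrableOn_const (by simp [Real.volume_Ioo, ENNReal.ofReal_lt_top])
  rw [integral_sub hint hconst, setIntegral_const, measureReal_def, Real.volume_Ioo,
    ENNReal.toReal_ofReal hba.le, smul_sub, intervalAvg, smul_smul,
    inv_mul_cancel₀ hba.ne', one_smul]

lemma norm_avg_sub_le (hu : LocallyIntegrable u) (hab : a < b) (c : ℂ) :
    ‖intervalAvg u a b - c‖ ≤ (b - a)⁻¹ * ∫ t in Set.Ioo a b, ‖u t - c‖ := by
  have hba : (0:ℝ) < b - a := sub_pos.2 hab
  rw [avg_sub hu hab c, norm_smul, norm_inv, Real.norm_of_nonneg hba.le]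
  exact mul_le_mul_of_nonneg_left (norm_integral_le_integral_norm _)
    (inv_nonneg.2 hba.le)

lemma osc_int (hu_top : bmoNorm u ≠ ⊤) (hab : a < b) :
    ∫ t in Set.Ioo a b, ‖u t - intervalAvg u a b‖ ≤ (b - a) * (bmoNorm u).toReal := by
  have hba : (0:ℝ) < b - a := sub_pos.2 hab
  have h := osc_le hu_top hab
  rw [oscAvg] at h
  calc ∫ t in Set.Ioo a b, ‖u t - intervalAvg u a b‖
      = (b - a) * ((b - a)⁻¹ * ∫ t in Set.Ioo a b, ‖u t - intervalAvg u a b‖) := by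
        field_simp
    _ ≤ (b - a) * (bmoNorm u).toReal := by
        exact mul_le_mul_of_nonneg_left h hba.le

lemma sub_norm_integrableOn (hu : LocallyIntegrable u) (c : ℂ) :
    IntegrableOn (fun t => ‖u t - c‖) (Set.Ioo a b) :=
  ((integrableOn_Ioo hu).sub (integrableOn_const
    (by simp [Real.volume_Ioo, ENNReal.ofReal_lt_top]))).norm

lemma avg_nested (hu : LocallyIntegrable u) (hu_top : bmoNorm u ≠ ⊤) {x y r : ℝ}
    (hy : 0 < y) (hr : y ≤ r) :
    ‖intervalAvg u (x - y) (x + y) - intervalAvg u (x - r) (x + r)‖ ≤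
      (r / y) * (bmoNorm u).toReal := by
  have hab : x - y < x + y := by linarith
  have hab' : x - r < x + r := by linarith
  set c := intervalAvg u (x - r) (x + r)
  have h1 := norm_avg_sub_le hu hab c
  have h2 : ∫ t in Set.Ioo (x - y) (x + y), ‖u t - c‖ ≤
      ∫ t in Set.Ioo (x - r) (x + r), ‖u t - c‖ := by
    apply setIntegral_mono_set (sub_norm_integrableOn hu c)
      (Filter.Eventually.of_forall fun t => norm_nonneg _)
    exact Filter.Eventually.of_forall (Set.Ioo_subset_Ioo (by linarith) (by linarith))
  have h3 : ∫ t in Set.Ioo (x - r) (x + r), ‖u t - c‖ ≤ 2 * r * (bmoNorm u).toReal := by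
    have := osc_int hu_top hab'
    have he : x + r - (x - r) = 2 * r := by ring
    rw [he] at this
    exact this
  have hN : 0 ≤ (bmoNorm u).toReal := ENNReal.toReal_nonneg
  have h4 : (x + y - (x - y))⁻¹ = (2 * y)⁻¹ := by norm_num; ring_nf
  calc ‖intervalAvg u (x - y) (x + y) - c‖ ≤
      (x + y - (x - y))⁻¹ * ∫ t in Set.Ioo (x - y) (x + y), ‖u t - c‖ := h1
    _ ≤ (2 * y)⁻¹ * (2 * r * (bmoNorm u).toReal) := by
        rw [h4]
        exact mul_le_mul_of_nonneg_left (h2.trans h3) (by positivity)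
    _ = (r / y) * (bmoNorm u).toReal := by field_simp

lemma window (hu : LocallyIntegrable u) (hu_top : bmoNorm u ≠ ⊤) {x y s : ℝ}
    (hy : 0 < y) (hs : 0 < s) :
    ∫ t in Set.Ioo (x - y * s) (x + y * s), ‖u t - intervalAvg u (x - y) (x + y)‖ ≤
      2 * y * (bmoNorm u).toReal * (s + 1) * (s + 2) := by
  set N := (bmoNorm u).toReal with hNdef
  have hN : 0 ≤ N := ENNReal.toReal_nonneg
  set r := y * (s + 1) with hrdef
  have hyr : y ≤ r := by nlinarith
  have hr0 : 0 < r := by nlinarith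
  set c₀ := intervalAvg u (x - y) (x + y)
  set cr := intervalAvg u (x - r) (x + r)
  have habr : x - r < x + r := by linarith
  have hcc : ‖c₀ - cr‖ ≤ (s + 1) * N := by
    have h := avg_nested hu hu_top hy hyr (x := x)
    have he : r / y = s + 1 := by rw [hrdef]; field_simp
    rwa [he] at h
  have hmono : ∫ t in Set.Ioo (x - y * s) (x + y * s), ‖u t - c₀‖ ≤
      ∫ t in Set.Ioo (x - r) (x + r), ‖u t - c₀‖ := by
    apply setIntegral_mono_set (sub_norm_integrableOn hu c₀)
      (Filter.Eventually.of_forall fun t => norm_nonneg _)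
    exact Filter.Eventually.of_forall (Set.Ioo_subset_Ioo (by nlinarith) (by nlinarith))
  have htri : ∫ t in Set.Ioo (x - r) (x + r), ‖u t - c₀‖ ≤
      (∫ t in Set.Ioo (x - r) (x + r), ‖u t - cr‖) + 2 * r * ((s + 1) * N) := by
    have hint1 := sub_norm_integrableOn (a := x - r) (b := x + r) hu cr
    have hint2 : IntegrableOn (fun _ : ℝ => ‖c₀ - cr‖ ) (Set.Ioo (x - r) (x + r)) :=
      integrableOn_const (by simp [Real.volume_Ioo, ENNReal.ofReal_lt_top])
    calc ∫ t in Set.Ioo (x - r) (x + r), ‖u t - c₀‖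
        ≤ ∫ t in Set.Ioo (x - r) (x + r), (‖u t - cr‖ + ‖c₀ - cr‖) := by
          apply setIntegral_mono_on (sub_norm_integrableOn hu c₀) (hint1.add hint2)
            measurableSet_Ioo
          intro t _
          calc ‖u t - c₀‖ = ‖(u t - cr) - (c₀ - cr)‖ := by ring_nf
            _ ≤ ‖u t - cr‖ + ‖c₀ - cr‖ := norm_sub_le _ _
      _ = (∫ t in Set.Ioo (x - r) (x + r), ‖u t - cr‖) +
            (volume (Set.Ioo (x - r) (x + r))).toReal * ‖c₀ - cr‖ := by
          rw [integral_add hint1 hint2, setIntegral_const, smul_eq_mul, measureReal_def]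
      _ ≤ (∫ t in Set.Ioo (x - r) (x + r), ‖u t - cr‖) + 2 * r * ((s + 1) * N) := by
          rw [Real.volume_Ioo, ENNReal.toReal_ofReal (by linarith),
            show x + r - (x - r) = 2 * r by ring]
          have : (2 * r) * ‖c₀ - cr‖ ≤ (2 * r) * ((s + 1) * N) :=
            mul_le_mul_of_nonneg_left hcc (by positivity)
          linarith
  have hosc : ∫ t in Set.Ioo (x - r) (x + r), ‖u t - cr‖ ≤ 2 * r * N := by
    have := osc_int hu_top habr
    rwa [show x + r - (x - r) = 2 * r by ring] at this
  calc ∫ t in Set.Ioo (x - y * s) (x + y * s), ‖u t - c₀‖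
      ≤ (∫ t in Set.Ioo (x - r) (x + r), ‖u t - cr‖) + 2 * r * ((s + 1) * N) :=
        hmono.trans htri
    _ ≤ 2 * r * N + 2 * r * ((s + 1) * N) := by linarith
    _ = 2 * y * N * (s + 1) * (s + 2) := by rw [hrdef]; ring

lemma expLayer (ρ : ℝ) :
    ∫⁻ s in Set.Ioi ρ, ENNReal.ofReal (Real.exp (-s)) = ENNReal.ofReal (Real.exp (-ρ)) := by
  have hI : IntegrableOn (fun s : ℝ => Real.exp (-s)) (Set.Ioi ρ) := by
    simpa using exp_neg_integrableOn_Ioi ρ one_pos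
  rw [← ofReal_integral_eq_lintegral_ofReal hI
    (Filter.Eventually.of_forall fun s => (Real.exp_pos _).le), integral_exp_neg_Ioi]

lemma polyBound {s : ℝ} (hs : 0 ≤ s) :
    Real.exp (-s) * ((s + 1) * (s + 2)) ≤ 12 * Real.exp (-s / 2) := by
  have h1 : 1 + s / 6 ≤ Real.exp (s / 6) := by
    have := Real.add_one_le_exp (s / 6); linarith
  have h2 : (1 + s / 6) ^ 3 ≤ Real.exp (s / 6) ^ 3 := by
    apply pow_le_pow_left₀ (by linarith) h1
  have h3 : Real.exp (s / 6) ^ 3 = Real.exp (s / 2) := by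
    rw [← Real.exp_nat_mul]; ring_nf
  have h4 : (s + 1) * (s + 2) ≤ 12 * Real.exp (s / 2) := by
    rw [← h3]
    nlinarith [h2, sq_nonneg s, pow_nonneg (by linarith : (0:ℝ) ≤ 1 + s/6) 3]
  have h5 : Real.exp (-s) * ((s+1)*(s+2)) ≤ Real.exp (-s) * (12 * Real.exp (s/2)) :=
    mul_le_mul_of_nonneg_left h4 (Real.exp_pos _).le
  calc Real.exp (-s) * ((s+1)*(s+2)) ≤ Real.exp (-s) * (12 * Real.exp (s/2)) := h5
    _ = 12 * Real.exp (-s / 2) := by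
        rw [mul_comm 12 (Real.exp (s/2)), ← mul_assoc, ← Real.exp_add (-s) (s/2)]
        ring_nf

lemma halfInt : ∫⁻ s in Set.Ioi (0:ℝ), ENNReal.ofReal (Real.exp (-s / 2)) =
    ENNReal.ofReal 2 := by
  have hint : IntegrableOn (fun s : ℝ => Real.exp (-s / 2)) (Set.Ioi 0) := by
    have := exp_neg_integrableOn_Ioi 0 (b := 1/2) (by norm_num)
    simpa [neg_div, div_eq_inv_mul, mul_comm] using this
  rw [← ofReal_integral_eq_lintegral_ofReal hint
    (Filter.Eventually.of_forall fun s => (Real.exp_pos _).le)]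
  congr 1
  have := integral_exp_neg_mul_rpow (p := 1) (b := 1/2) one_pos (by norm_num)
  simp only [Real.rpow_one] at this
  rw [show ∫ s in Set.Ioi (0:ℝ), Real.exp (-s / 2) =
      ∫ s in Set.Ioi (0:ℝ), Real.exp (-(1/2) * s) by
    congr 1; ext s; ring_nf, this]
  norm_num [Real.rpow_neg_one, Real.Gamma_two]

lemma int_exp_negabs : Integrable (fun z : ℝ => Real.exp (-|z|)) := by
  have h1 : IntegrableOn (fun z : ℝ => Real.exp (-|z|)) (Set.Ioi 0) := by
    apply (exp_neg_integrableOn_Ioi 0 one_pos).congr_fun _ measurableSet_Ioi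
    intro z hz
    simp [abs_of_pos (Set.mem_Ioi.1 hz)]
  have h2 : IntegrableOn (fun z : ℝ => Real.exp (-|z|)) (Set.Iic 0) := by
    apply (integrableOn_exp_Iic 0).congr_fun _ measurableSet_Iic
    intro z hz
    simp [abs_of_nonpos (Set.mem_Iic.1 hz)]
  have := h2.union h1
  rwa [Set.Iic_union_Ioi, integrableOn_univ] at this

lemma window_lintegral (hu : LocallyIntegrable u) (hu_top : bmoNorm u ≠ ⊤) {x y s : ℝ}
    (hy : 0 < y) (hs : 0 < s) :
    ∫⁻ t in Set.Ioo (x - y * s) (x + y * s),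
        (‖u t - intervalAvg u (x - y) (x + y)‖₊ : ℝ≥0∞) ≤
      ENNReal.ofReal (2 * y * (bmoNorm u).toReal * (s + 1) * (s + 2)) := by
  have hint : IntegrableOn (fun t => u t - intervalAvg u (x - y) (x + y))
      (Set.Ioo (x - y * s) (x + y * s)) :=
    (integrableOn_Ioo hu).sub (integrableOn_const
      (by simp [Real.volume_Ioo, ENNReal.ofReal_lt_top]))
  simp only [← enorm_eq_nnnorm]
  rw [← ofReal_integral_norm_eq_lintegral_enorm hint]
  exact ENNReal.ofReal_le_ofReal (window hu hu_top hy hs)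

lemma key_lintegral (hu : LocallyIntegrable u) (hu_top : bmoNorm u ≠ ⊤) {x y : ℝ}
    (hy : 0 < y) :
    ∫⁻ t, ENNReal.ofReal (Real.exp (-(|x - t| / y))) *
        (‖u t - intervalAvg u (x - y) (x + y)‖₊ : ℝ≥0∞) ≤
      ENNReal.ofReal (48 * y * (bmoNorm u).toReal) := by
  set N := (bmoNorm u).toReal with hNdef
  have hN : 0 ≤ N := ENNReal.toReal_nonneg
  set c₀ := intervalAvg u (x - y) (x + y) with hc₀
  set g : ℝ → ℝ≥0∞ := fun t => (‖u t - c₀‖₊ : ℝ≥0∞) with hgdef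
  have hglt : ∀ t, g t ≠ ⊤ := fun t => ENNReal.coe_ne_top
  have hgm : AEMeasurable g volume := by
    exact (hu.aestronglyMeasurable.sub aestronglyMeasurable_const).enorm
  set S : Set (ℝ × ℝ) := {p : ℝ × ℝ | |x - p.1| / y < p.2} with hS
  have hSm : MeasurableSet S := by
    apply measurableSet_lt
    · exact ((measurable_const.sub measurable_fst).abs).div_const y
    · exact measurable_snd
  set F : ℝ × ℝ → ℝ≥0∞ :=
    fun p => S.indicator (fun q => ENNReal.ofReal (Real.exp (-q.2)) * g q.1) p with hF
  have hFm : AEMeasurable F (volume.prod volume) := by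
    apply AEMeasurable.indicator _ hSm
    exact ((measurable_snd.neg.exp.ennreal_ofReal).aemeasurable).mul
      (hgm.comp_quasiMeasurePreserving MeasureTheory.Measure.quasiMeasurePreserving_fst)
  have step1 : ∀ t : ℝ, ENNReal.ofReal (Real.exp (-(|x - t| / y))) * g t =
      ∫⁻ s, F (t, s) := by
    intro t
    have he : (fun s => F (t, s)) =
        (Set.Ioi (|x - t| / y)).indicator (fun s => ENNReal.ofReal (Real.exp (-s)) * g t) := by
      funext s
      by_cases h : |x - t| / y < s
      · simp [hF, Set.indicator_of_mem, h, Set.mem_setOf_eq, Set.mem_Ioi, hS]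
      · simp [hF, Set.indicator_of_notMem, h, Set.mem_setOf_eq, Set.mem_Ioi, hS]
    have h2 : ∫⁻ s, F (t, s) =
        ∫⁻ s in Set.Ioi (|x - t| / y), ENNReal.ofReal (Real.exp (-s)) * g t := by
      rw [← lintegral_indicator measurableSet_Ioi _]
      exact lintegral_congr fun s => congrFun he s
    rw [h2, lintegral_mul_const' (g t) _ (hglt t), expLayer]
  have step2 : ∀ s : ℝ, ∫⁻ t, F (t, s) =
      ENNReal.ofReal (Real.exp (-s)) * ∫⁻ t in Set.Ioo (x - y * s) (x + y * s), g t := by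
    intro s
    have he : (fun t => F (t, s)) =
        (Set.Ioo (x - y * s) (x + y * s)).indicator
          (fun t => ENNReal.ofReal (Real.exp (-s)) * g t) := by
      funext t
      have hiff : (t, s) ∈ S ↔ t ∈ Set.Ioo (x - y * s) (x + y * s) := by
        simp only [hS, Set.mem_setOf_eq, Set.mem_Ioo]
        rw [div_lt_iff₀ hy]
        constructor
        · intro h
          have := abs_lt.1 h
          constructor <;> nlinarith [this.1, this.2]
        · intro h
          rw [abs_lt]
          constructor <;> nlinarith [h.1, h.2]
      by_cases h : (t, s) ∈ S
      · simp only [hF]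
        rw [Set.indicator_of_mem h, Set.indicator_of_mem (hiff.1 h)]
      · simp only [hF]
        rw [Set.indicator_of_notMem h, Set.indicator_of_notMem (fun hc => h (hiff.2 hc))]
    have h2 : ∫⁻ t, F (t, s) =
        ∫⁻ t in Set.Ioo (x - y * s) (x + y * s), ENNReal.ofReal (Real.exp (-s)) * g t := by
      rw [← lintegral_indicator measurableSet_Ioo _]
      exact lintegral_congr fun t => congrFun he t
    rw [h2, lintegral_const_mul' _ _ ENNReal.ofReal_ne_top]
  calc ∫⁻ t, ENNReal.ofReal (Real.exp (-(|x - t| / y))) * g t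
      = ∫⁻ t, ∫⁻ s, F (t, s) := by
        apply lintegral_congr; intro t; exact step1 t
    _ = ∫⁻ s, ∫⁻ t, F (t, s) := lintegral_lintegral_swap hFm
    _ ≤ ∫⁻ s, (Set.Ioi (0:ℝ)).indicator
          (fun s => ENNReal.ofReal (24 * y * N * Real.exp (-s / 2))) s := by
        apply lintegral_mono
        intro s
        dsimp only
        rw [step2 s]
        by_cases hs : 0 < s
        · rw [Set.indicator_of_mem (Set.mem_Ioi.2 hs)]
          calc ENNReal.ofReal (Real.exp (-s)) * ∫⁻ t in Set.Ioo (x - y*s) (x + y*s), g t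
              ≤ ENNReal.ofReal (Real.exp (-s)) *
                  ENNReal.ofReal (2 * y * N * (s + 1) * (s + 2)) := by
                exact mul_le_mul_right (window_lintegral hu hu_top hy hs) _
            _ = ENNReal.ofReal (Real.exp (-s) * (2 * y * N * (s + 1) * (s + 2))) := by
                rw [← ENNReal.ofReal_mul (Real.exp_pos _).le]
            _ ≤ ENNReal.ofReal (24 * y * N * Real.exp (-s / 2)) := by
                apply ENNReal.ofReal_le_ofReal
                have := polyBound hs.le
                nlinarith [Real.exp_pos (-s), Real.exp_pos (-s/2), this,
                  mul_le_mul_of_nonneg_left this (by positivity : (0:ℝ) ≤ 2 * y * N)]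
        · rw [Set.indicator_of_notMem (by simpa using hs)]
          have : Set.Ioo (x - y * s) (x + y * s) = ∅ := by
            apply Set.Ioo_eq_empty
            intro h
            apply hs
            nlinarith
          rw [this]
          simp
    _ = ∫⁻ s in Set.Ioi (0:ℝ), ENNReal.ofReal (24 * y * N * Real.exp (-s / 2)) := by
        rw [lintegral_indicator measurableSet_Ioi _]
    _ = ENNReal.ofReal (24 * y * N) * ∫⁻ s in Set.Ioi (0:ℝ),
          ENNReal.ofReal (Real.exp (-s / 2)) := by
        rw [← lintegral_const_mul' _ _ ENNReal.ofReal_ne_top]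
        apply lintegral_congr
        intro s
        rw [← ENNReal.ofReal_mul (by positivity)]
        try ring_nf
    _ = ENNReal.ofReal (48 * y * N) := by
        rw [halfInt, ← ENNReal.ofReal_mul (by positivity)]
        congr 1
        ring

lemma dil_norm_le {φ : ℝ → ℂ} {C : ℝ} (hφb : ∀ z, ‖φ z‖ ≤ C * Real.exp (-|z|))
    {y : ℝ} (hy : 0 < y) (z : ℝ) :
    ‖(y : ℂ)⁻¹ * φ (z / y)‖ ≤ C / y * Real.exp (-(|z| / y)) := by
  have h1 : ‖(y : ℂ)⁻¹‖ = y⁻¹ := by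
    rw [norm_inv, Complex.norm_real, Real.norm_eq_abs, abs_of_pos hy]
  rw [norm_mul, h1]
  have h2 : |z / y| = |z| / y := by rw [abs_div, abs_of_pos hy]
  have := hφb (z / y)
  rw [h2] at this
  calc y⁻¹ * ‖φ (z / y)‖ ≤ y⁻¹ * (C * Real.exp (-(|z| / y))) := by
        apply mul_le_mul_of_nonneg_left _ (by positivity)
        exact this
    _ = C / y * Real.exp (-(|z| / y)) := by ring

lemma conv_bound {φ : ℝ → ℂ} {C : ℝ} (hC : 0 < C) (hφm : Measurable φ)
    (hφb : ∀ z, ‖φ z‖ ≤ C * Real.exp (-|z|))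
    (hu : LocallyIntegrable u) (hu_top : bmoNorm u ≠ ⊤) {x y : ℝ} (hy : 0 < y) :
    Integrable (fun t => (y : ℂ)⁻¹ * φ ((x - t) / y) *
        (u t - intervalAvg u (x - y) (x + y))) ∧
      ‖∫ t, (y : ℂ)⁻¹ * φ ((x - t) / y) * (u t - intervalAvg u (x - y) (x + y))‖ ≤
        48 * C * (bmoNorm u).toReal := by
  set N := (bmoNorm u).toReal with hNdef
  have hN : 0 ≤ N := ENNReal.toReal_nonneg
  set c₀ := intervalAvg u (x - y) (x + y) with hc₀
  set f : ℝ → ℂ := fun t => (y : ℂ)⁻¹ * φ ((x - t) / y) * (u t - c₀) with hf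
  have hfm : AEStronglyMeasurable f volume := by
    apply AEStronglyMeasurable.mul
    · exact ((hφm.comp ((measurable_const.sub measurable_id).div_const y)).const_mul
        ((y : ℂ)⁻¹)).aestronglyMeasurable
    · exact hu.aestronglyMeasurable.sub aestronglyMeasurable_const
  have hker : ∀ t : ℝ, (‖f t‖₊ : ℝ≥0∞) ≤ ENNReal.ofReal (C / y) *
      (ENNReal.ofReal (Real.exp (-(|x - t| / y))) * (‖u t - c₀‖₊ : ℝ≥0∞)) := by
    intro t
    have h1 : (‖f t‖₊ : ℝ≥0∞) =
        (‖(y : ℂ)⁻¹ * φ ((x - t) / y)‖₊ : ℝ≥0∞) * (‖u t - c₀‖₊ : ℝ≥0∞) := by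
      rw [hf]
      simp [nnnorm_mul]
    rw [h1, ← mul_assoc]
    apply mul_le_mul_left
    rw [← enorm_eq_nnnorm, ← ofReal_norm_eq_enorm, ← ENNReal.ofReal_mul (by positivity)]
    exact ENNReal.ofReal_le_ofReal (dil_norm_le hφb hy (x - t))
  have hlin : ∫⁻ t, (‖f t‖₊ : ℝ≥0∞) ≤ ENNReal.ofReal (48 * C * N) := by
    calc ∫⁻ t, (‖f t‖₊ : ℝ≥0∞)
        ≤ ∫⁻ t, ENNReal.ofReal (C / y) *
            (ENNReal.ofReal (Real.exp (-(|x - t| / y))) * (‖u t - c₀‖₊ : ℝ≥0∞)) :=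
          lintegral_mono hker
      _ = ENNReal.ofReal (C / y) * ∫⁻ t,
            ENNReal.ofReal (Real.exp (-(|x - t| / y))) * (‖u t - c₀‖₊ : ℝ≥0∞) :=
          lintegral_const_mul' _ _ ENNReal.ofReal_ne_top
      _ ≤ ENNReal.ofReal (C / y) * ENNReal.ofReal (48 * y * N) :=
          mul_le_mul_right (key_lintegral hu hu_top hy) _
      _ = ENNReal.ofReal (48 * C * N) := by
          rw [← ENNReal.ofReal_mul (by positivity)]
          congr 1
          field_simp
  have hfi : Integrable f := ⟨hfm, lt_of_le_of_lt hlin ENNReal.ofReal_lt_top⟩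
  refine ⟨hfi, ?_⟩
  calc ‖∫ t, f t‖ ≤ (∫⁻ t, ENNReal.ofReal ‖f t‖).toReal :=
        norm_integral_le_lintegral_norm f
    _ ≤ (ENNReal.ofReal (48 * C * N)).toReal := by
        apply ENNReal.toReal_mono ENNReal.ofReal_ne_top
        simpa only [ofReal_norm_eq_enorm, enorm_eq_nnnorm] using hlin
    _ = 48 * C * N := ENNReal.toReal_ofReal (by positivity)

lemma kernel_integral_one {φ : ℝ → ℂ} (hφ1 : (∫ z, φ z) = 1) {y : ℝ} (hy : 0 < y)
    (x : ℝ) : (∫ t, (y : ℂ)⁻¹ * φ ((x - t) / y)) = 1 := by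
  have h1 : (∫ t, (y : ℂ)⁻¹ * φ ((x - t) / y)) =
      (y : ℂ)⁻¹ * ∫ t, φ ((x - t) / y) := integral_const_mul _ _
  have h2 : (∫ t, φ ((x - t) / y)) = ∫ t, φ (t / y) :=
    integral_sub_left_eq_self (fun t => φ (t / y)) volume x
  have h3 : (∫ t, φ (t / y)) = |y| • ∫ z, φ z := MeasureTheory.Measure.integral_comp_div _ y
  rw [h1, h2, h3, hφ1, abs_of_pos hy]
  rw [Complex.real_smul, mul_one]
  rw [inv_mul_cancel₀ (by exact_mod_cast hy.ne')]

lemma kernel_integrable {φ : ℝ → ℂ} {C : ℝ} (hφm : Measurable φ)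
    (hφb : ∀ z, ‖φ z‖ ≤ C * Real.exp (-|z|)) {y : ℝ} (hy : 0 < y) (x : ℝ) :
    Integrable (fun t => (y : ℂ)⁻¹ * φ ((x - t) / y)) := by
  have hφint : Integrable φ :=
    (int_exp_negabs.const_mul C).mono' hφm.aestronglyMeasurable
      (Filter.Eventually.of_forall hφb)
  have h1 : Integrable (fun z : ℝ => φ (z / y)) := hφint.comp_div hy.ne'
  have h2 : Integrable (fun t : ℝ => φ ((x - t) / y)) := h1.comp_sub_left x
  exact h2.const_mul _

end AuxStmt9

/-- for a normalized kernel with exponential decay, the convolution `φ_y ∗ u`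
differs from the interval average `u_{I(x,y)}` by at most `C₁‖u‖_*`, whence the two-sided
bound on `|e^{(φ_y ∗ u)(x) − u_{I(x,y)}}|`. -/
theorem stmt9 (C₀ CJN : ℝ) (hC₀ : 0 < C₀) (hCJN : 0 < CJN) (hJN : JNineq C₀ CJN)
    (C : ℝ) (hC : 0 < C) :
    ∃ C₁ : ℝ, 0 < C₁ ∧
      ∀ φ : ℝ → ℂ, Measurable φ → (∀ x, ‖φ x‖ ≤ C * Real.exp (-|x|)) →
        (∫ x : ℝ, φ x) = 1 →
      ∀ u : ℝ → ℂ, LocallyIntegrable u → bmoNorm u ≠ ⊤ →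
      ∀ x y : ℝ, 0 < y →
        ‖(∫ t : ℝ, dil φ y (x - t) * u t) - intervalAvg u (x - y) (x + y)‖ ≤
            C₁ * (bmoNorm u).toReal ∧
        Real.exp (-(C₁ * (bmoNorm u).toReal)) ≤
            ‖Complex.exp ((∫ t : ℝ, dil φ y (x - t) * u t) -
              intervalAvg u (x - y) (x + y))‖ ∧
        ‖Complex.exp ((∫ t : ℝ, dil φ y (x - t) * u t) -
              intervalAvg u (x - y) (x + y))‖ ≤
            Real.exp (C₁ * (bmoNorm u).toReal) := by
  refine ⟨48 * C, by positivity, ?_⟩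
  intro φ hφm hφb hφ1 u hu hu_top x y hy
  set N := (bmoNorm u).toReal with hNdef
  set c₀ := intervalAvg u (x - y) (x + y) with hc₀
  obtain ⟨hfi, hbound⟩ := conv_bound hC hφm hφb hu hu_top hy (x := x)
  have hKint := kernel_integrable hφm hφb hy x
  have hK1 := kernel_integral_one hφ1 hy x
  have hmain : (∫ t, dil φ y (x - t) * u t) - c₀ =
      ∫ t, (y : ℂ)⁻¹ * φ ((x - t) / y) * (u t - c₀) := by
    have he : (fun t => dil φ y (x - t) * u t) =
        fun t => (y : ℂ)⁻¹ * φ ((x - t) / y) * (u t - c₀) +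
          ((y : ℂ)⁻¹ * φ ((x - t) / y)) * c₀ := by
      funext t
      simp only [dil]
      ring
    rw [he, integral_add hfi (hKint.mul_const c₀), integral_mul_const, hK1, one_mul]
    ring
  have h1 : ‖(∫ t, dil φ y (x - t) * u t) - c₀‖ ≤ 48 * C * N := by
    rw [hmain]; exact hbound
  set z := (∫ t, dil φ y (x - t) * u t) - c₀ with hz
  have h2 : |z.re| ≤ 48 * C * N :=
    le_trans (Complex.abs_re_le_norm z) h1
  have h3 := abs_le.1 h2
  refine ⟨h1, ?_, ?_⟩
  · rw [Complex.norm_exp]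
    exact Real.exp_le_exp.2 (by linarith [h3.1])
  · rw [Complex.norm_exp]
    exact Real.exp_le_exp.2 h3.2
end
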